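/- For every t > 0 and h > 0, the equation x = F(t·x + h), where F(u) = E[tanh(z·√u + u)] with z standard Gaussian, has a unique solution x = x̄(t,h) in (0,1). -/

import Mathlib

/-!
Shifting the Gaussian by `√u` and using `eʸ tanh y = eʸ - sech y` gives
`F(u) = 1 - e^{-u/2} E[sech(√u z)]`, so `0 < F < 1` on `(0, ∞)`. Differentiating under the
expectation and integrating by parts against the Gaussian (`E[z g(z)] = E[g'(z)]`) gives
`F'(u) = e^{-u/2} E[sech³(√u z)]`, which decreases in `u`: `F` is concave.
For concave `F` with `F(h) > 0`, the secant slope `(F(tx + h) - F(h)) / (tx)` is nonincreasing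
in `x`, while at a solution it equals `1/t - F(h)/(tx)`, which is strictly increasing; so there is
at most one solution, and the intermediate value theorem provides one.
-/

open MeasureTheory ProbabilityTheory Real Set

/-- `F(u) = E_z[tanh(z√u + u)]` with `z ~ N(0,1)`. -/
noncomputable def FNL (u : ℝ) : ℝ :=
  ∫ z, Real.tanh (z * Real.sqrt u + u) ∂(gaussianReal 0 1)

theorem ConcaveOn.existsUnique_eq_comp_mul_add {F : ℝ → ℝ} (hF : ConcaveOn ℝ (Ioi 0) F)
    (hpos : ∀ u, 0 < u → 0 < F u) (hlt : ∀ u, 0 < u → F u < 1) {t h : ℝ} (ht : 0 < t)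
    (hh : 0 < h) : ∃! x, 0 < x ∧ x < 1 ∧ x = F (t * x + h) := by
  have harg : ∀ x, 0 ≤ x → 0 < t * x + h := fun x hx => by positivity
  have hunique : ∀ x₁ x₂, 0 < x₁ → x₁ < x₂ → x₁ = F (t * x₁ + h) → x₂ ≠ F (t * x₂ + h) := by
    intro x₁ x₂ hx₁ h₁₂ hF₁ hF₂
    have hsecant := hF.neg.secant_mono_aux1 (mem_Ioi.2 hh) (mem_Ioi.2 (harg x₂ (by linarith)))
      (by nlinarith : h < t * x₁ + h) (by nlinarith : t * x₁ + h < t * x₂ + h)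
    simp only [Pi.neg_apply, ← hF₁, ← hF₂] at hsecant
    nlinarith [mul_pos (mul_pos ht (sub_pos.2 h₁₂)) (hpos h hh)]
  obtain ⟨x, hx, hfx⟩ : ∃ x ∈ Icc (0 : ℝ) 1, F (t * x + h) - x = 0 := by
    have hcont : ContinuousOn (fun x => F (t * x + h) - x) (Icc 0 1) := by
      refine ContinuousOn.sub ?_ continuousOn_id
      refine (interior_Ioi (a := (0 : ℝ)) ▸ hF.continuousOn_interior).comp (by fun_prop) ?_
      exact fun x hx => harg x hx.1
    refine intermediate_value_Icc' zero_le_one hcont ⟨?_, ?_⟩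
    · linarith [hlt _ (harg 1 zero_le_one)]
    · linarith [hpos _ (harg 0 le_rfl)]
  have hxF : x = F (t * x + h) := by linarith
  have hx₀ : 0 < x := hxF ▸ hpos _ (harg x hx.1)
  refine ⟨x, ⟨hx₀, hxF ▸ hlt _ (harg x hx.1), hxF⟩, fun y ⟨hy, _, hyF⟩ => ?_⟩
  rcases lt_trichotomy y x with hyx | rfl | hxy
  · exact absurd hxF (hunique y x hy hyx hyF)
  · rfl
  · exact absurd hyF (hunique x y hx₀ hxy hxF)

namespace ProbabilityTheory

lemma gaussianPDFReal_zero_one (z : ℝ) :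
    gaussianPDFReal 0 1 z = (√(2 * π))⁻¹ * exp (-(z ^ 2 / 2)) := by
  simp [gaussianPDFReal, neg_div]

lemma hasDerivAt_gaussianPDFReal_zero_one (z : ℝ) :
    HasDerivAt (gaussianPDFReal 0 1) (-z * gaussianPDFReal 0 1 z) z := by
  have hin : HasDerivAt (fun z : ℝ => -(z ^ 2 / 2)) (-z) z :=
    ((hasDerivAt_pow 2 z).div_const 2).fun_neg.congr_deriv (by ring)
  refine ((hin.exp.const_mul (√(2 * π))⁻¹).congr_deriv ?_).congr_of_eventuallyEq
    (.of_forall gaussianPDFReal_zero_one)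
  rw [gaussianPDFReal_zero_one]; ring

lemma integrable_mul_gaussianPDFReal_zero_one :
    Integrable fun z : ℝ => z * gaussianPDFReal 0 1 z := by
  convert (integrable_mul_exp_neg_mul_sq (b := 1 / 2) (by norm_num)).const_mul (√(2 * π))⁻¹
    using 2 with z
  rw [gaussianPDFReal_zero_one]; ring_nf

theorem integral_mul_gaussianReal_eq_integral_deriv {g g' : ℝ → ℝ} {C C' : ℝ}
    (hg : ∀ z, HasDerivAt g (g' z) z) (hgC : ∀ z, ‖g z‖ ≤ C) (hg'C : ∀ z, ‖g' z‖ ≤ C') :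
    ∫ z, z * g z ∂gaussianReal 0 1 = ∫ z, g' z ∂gaussianReal 0 1 := by
  have hg_meas : AEStronglyMeasurable g volume :=
    (continuous_iff_continuousAt.2 fun z => (hg z).continuousAt).aestronglyMeasurable
  have hg'_meas : AEStronglyMeasurable g' volume := by
    rw [← funext fun z => (hg z).deriv]; exact (measurable_deriv g).aestronglyMeasurable
  have hφ := integrable_gaussianPDFReal 0 1
  have hφ' : Integrable fun z => -z * gaussianPDFReal 0 1 z := by
    simpa only [neg_mul] using integrable_mul_gaussianPDFReal_zero_one.fun_neg
  have key := integral_mul_deriv_eq_deriv_mul_of_integrable (fun z _ => hg z)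
    (fun z _ => hasDerivAt_gaussianPDFReal_zero_one z)
    (hφ'.bdd_mul hg_meas (ae_of_all _ hgC)) (hφ.bdd_mul hg'_meas (ae_of_all _ hg'C))
    (hφ.bdd_mul hg_meas (ae_of_all _ hgC))
  simp only [integral_gaussianReal_eq_integral_smul one_ne_zero, smul_eq_mul]
  calc ∫ z, gaussianPDFReal 0 1 z * (z * g z)
        = -∫ z, g z * (-z * gaussianPDFReal 0 1 z) := by
        rw [← integral_neg]; congr 1; ext z; ring
    _ = ∫ z, gaussianPDFReal 0 1 z * g' z := by
        rw [key, neg_neg]; congr 1; ext z; ring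

lemma integral_comp_add_gaussianReal (f : ℝ → ℝ) (c : ℝ) :
    ∫ z, f (z + c) ∂gaussianReal 0 1
      = exp (-(c ^ 2 / 2)) * ∫ z, exp (c * z) * f z ∂gaussianReal 0 1 := by
  have hshift : ∀ z, gaussianPDFReal 0 1 (z - c)
      = exp (-(c ^ 2 / 2)) * (gaussianPDFReal 0 1 z * exp (c * z)) := by
    intro z
    simp only [gaussianPDFReal_zero_one]
    rw [mul_left_comm, mul_assoc, ← exp_add, ← exp_add]; ring_nf
  simp only [integral_gaussianReal_eq_integral_smul one_ne_zero, smul_eq_mul]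
  rw [← integral_sub_right_eq_self _ c, ← integral_const_mul]
  simp only [sub_add_cancel, hshift]
  congr 1; ext z; ring

end ProbabilityTheory

namespace Real

lemma exp_mul_tanh (y : ℝ) : exp y * tanh y = exp y - (cosh y)⁻¹ := by
  have hc := (cosh_pos y).ne'
  rw [tanh_eq_sinh_div_cosh, ← cosh_add_sinh y]
  field_simp
  linear_combination sinh_sq y

lemma inv_cosh_le_one (y : ℝ) : (cosh y)⁻¹ ≤ 1 := inv_le_one_of_one_le₀ (one_le_cosh y)

lemma inv_cosh_anti {x y : ℝ} (h : |x| ≤ |y|) : (cosh y)⁻¹ ≤ (cosh x)⁻¹ :=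
  inv_anti₀ (cosh_pos x) (cosh_le_cosh.2 h)

lemma abs_sinh_le_cosh (y : ℝ) : |sinh y| ≤ cosh y := by
  rw [abs_sinh, ← cosh_abs]
  linarith [cosh_sub_sinh |y|, exp_pos (-|y|)]

lemma abs_sinh_div_cosh_sq_le_one (y : ℝ) : |sinh y / cosh y ^ 2| ≤ 1 := by
  have hc := one_le_cosh y
  rw [abs_div, abs_of_pos (by positivity : 0 < cosh y ^ 2), div_le_one (by positivity)]
  nlinarith [abs_sinh_le_cosh y]

lemma hasDerivAt_inv_cosh (y : ℝ) :
    HasDerivAt (fun y => (cosh y)⁻¹) (-sinh y / cosh y ^ 2) y :=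
  (hasDerivAt_cosh y).inv (cosh_pos y).ne'

lemma hasDerivAt_sinh_div_cosh_sq (y : ℝ) :
    HasDerivAt (fun y => sinh y / cosh y ^ 2) (2 * (cosh y)⁻¹ ^ 3 - (cosh y)⁻¹) y := by
  have hc := (cosh_pos y).ne'
  refine ((hasDerivAt_sinh y).div ((hasDerivAt_cosh y).fun_pow 2)
    (pow_ne_zero 2 hc)).congr_deriv ?_
  field_simp
  norm_num
  linear_combination (-2 * cosh y) * sinh_sq y

lemma abs_two_mul_inv_cosh_pow_three_sub_le (y : ℝ) :
    |2 * (cosh y)⁻¹ ^ 3 - (cosh y)⁻¹| ≤ 1 := by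
  have h0 : 0 < (cosh y)⁻¹ := by positivity
  have h1 := inv_cosh_le_one y
  rw [abs_le]; constructor <;> nlinarith [mul_pos h0 h0]

end Real

noncomputable def sechMean (c : ℝ) : ℝ := ∫ z, (cosh (c * z))⁻¹ ∂gaussianReal 0 1

noncomputable def sechCubeMean (c : ℝ) : ℝ := ∫ z, (cosh (c * z))⁻¹ ^ 3 ∂gaussianReal 0 1

lemma integrable_inv_cosh_mul_pow (c : ℝ) (n : ℕ) :
    Integrable (fun z => (cosh (c * z))⁻¹ ^ n) (gaussianReal 0 1) := by
  refine .of_bound (by fun_prop) 1 (ae_of_all _ fun z => ?_)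
  rw [norm_pow, norm_inv, norm_of_nonneg (cosh_pos _).le]
  exact pow_le_one₀ (by positivity) (inv_cosh_le_one _)

lemma integrable_inv_cosh_mul (c : ℝ) :
    Integrable (fun z => (cosh (c * z))⁻¹) (gaussianReal 0 1) := by
  simpa using integrable_inv_cosh_mul_pow c 1

lemma sechMean_pos (c : ℝ) : 0 < sechMean c := by
  rw [sechMean, integral_pos_iff_support_of_nonneg (fun z => by positivity)
    (integrable_inv_cosh_mul c)]
  simp [Function.support, (cosh_pos _).ne']

lemma sechMean_le_one (c : ℝ) : sechMean c ≤ 1 := by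
  simpa [sechMean] using integral_mono (integrable_inv_cosh_mul c)
    (integrable_const (1 : ℝ)) fun z => inv_cosh_le_one (c * z)

lemma sechCubeMean_nonneg (c : ℝ) : 0 ≤ sechCubeMean c :=
  integral_nonneg fun z => by positivity

lemma sechCubeMean_anti {a b : ℝ} (ha : 0 ≤ a) (hab : a ≤ b) :
    sechCubeMean b ≤ sechCubeMean a := by
  refine integral_mono (integrable_inv_cosh_mul_pow b 3) (integrable_inv_cosh_mul_pow a 3)
    fun z => pow_le_pow_left₀ (by positivity) (inv_cosh_anti ?_) 3
  rw [abs_mul, abs_mul, abs_of_nonneg ha, abs_of_nonneg (ha.trans hab)]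
  exact mul_le_mul_of_nonneg_right hab (abs_nonneg z)

lemma hasDerivAt_sechMean (c : ℝ) :
    HasDerivAt sechMean (c * (sechMean c - 2 * sechCubeMean c)) c := by
  have hdiff : ∀ z c, HasDerivAt (fun c => (cosh (c * z))⁻¹)
      (-(z * (sinh (c * z) / cosh (c * z) ^ 2))) c := fun z c => by
    have := (hasDerivAt_inv_cosh (c * z)).comp c (hasDerivAt_mul_const z)
    exact this.congr_deriv (by ring)
  have hbound : ∀ z c, ‖-(z * (sinh (c * z) / cosh (c * z) ^ 2))‖ ≤ |z| := fun z c => by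
    rw [norm_neg, norm_mul, norm_eq_abs, norm_eq_abs]
    exact mul_le_of_le_one_right (abs_nonneg z) (abs_sinh_div_cosh_sq_le_one _)
  have hderiv := (hasDerivAt_integral_of_dominated_loc_of_deriv_le Filter.univ_mem
    (.of_forall fun c => by fun_prop) (integrable_inv_cosh_mul c) (by fun_prop)
    (ae_of_all _ fun z c _ => hbound z c) ((memLp_id_gaussianReal 1).integrable le_rfl).abs
    (ae_of_all _ fun z c _ => hdiff z c)).2
  have hstein := integral_mul_gaussianReal_eq_integral_deriv
    (g := fun z => sinh (c * z) / cosh (c * z) ^ 2) (C := 1) (C' := |c|)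
    (fun z => by
      have := (hasDerivAt_sinh_div_cosh_sq (c * z)).comp z (hasDerivAt_const_mul c)
      exact this.congr_deriv (mul_comm _ _))
    (fun z => abs_sinh_div_cosh_sq_le_one _)
    (fun z => by
      rw [norm_mul, norm_eq_abs, norm_eq_abs]
      exact mul_le_of_le_one_right (abs_nonneg c) (abs_two_mul_inv_cosh_pow_three_sub_le _))
  refine hderiv.congr_deriv ?_
  rw [integral_neg, hstein, integral_const_mul, integral_sub
    ((integrable_inv_cosh_mul_pow c 3).const_mul 2) (integrable_inv_cosh_mul c),
    integral_const_mul, sechMean, sechCubeMean]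
  ring

lemma FNL_eq {u : ℝ} (hu : 0 ≤ u) : FNL u = 1 - exp (-(u / 2)) * sechMean √u := by
  set c := √u
  have hu' : u = c ^ 2 := (sq_sqrt hu).symm
  have hmgf : ∫ z, exp (c * z) ∂gaussianReal 0 1 = exp (c ^ 2 / 2) := by
    simpa [mgf] using congrFun (mgf_id_gaussianReal (μ := 0) (v := 1)) c
  calc FNL u = ∫ z, tanh ((z + c) * c) ∂gaussianReal 0 1 := by
        simp only [FNL, add_mul, ← sq, ← hu']; rfl
    _ = exp (-(c ^ 2 / 2)) * ∫ z, exp (c * z) * tanh (z * c) ∂gaussianReal 0 1 :=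
        integral_comp_add_gaussianReal (fun w => tanh (w * c)) c
    _ = exp (-(c ^ 2 / 2)) * ∫ z, (exp (c * z) - (cosh (c * z))⁻¹) ∂gaussianReal 0 1 := by
        simp_rw [mul_comm _ c, exp_mul_tanh]
    _ = 1 - exp (-(u / 2)) * sechMean c := by
        rw [integral_sub (integrable_exp_mul_gaussianReal c) (integrable_inv_cosh_mul c), hmgf,
          mul_sub, ← exp_add, neg_add_cancel, exp_zero, hu', sechMean]

lemma hasDerivAt_FNL {u : ℝ} (hu : 0 < u) :
    HasDerivAt FNL (exp (-(u / 2)) * sechCubeMean √u) u := by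
  have hsqrt := (hasDerivAt_sechMean √u).comp u (hasDerivAt_sqrt hu.ne')
  have hexp : HasDerivAt (fun u => exp (-(u / 2))) (exp (-(u / 2)) * -(1 / 2)) u :=
    ((hasDerivAt_id u).div_const 2).neg.exp
  refine ((hexp.mul hsqrt).const_sub 1).congr_deriv ?_ |>.congr_of_eventuallyEq ?_
  · have hs : 0 < √u := sqrt_pos.2 hu
    simp only [Function.comp_apply]
    field_simp
    ring
  · filter_upwards [Ioi_mem_nhds hu] with v hv using FNL_eq (le_of_lt hv)

lemma FNL_pos {u : ℝ} (hu : 0 < u) : 0 < FNL u := by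
  have : exp (-(u / 2)) < 1 := exp_lt_one_iff.2 (by linarith)
  rw [FNL_eq hu.le]
  nlinarith [sechMean_le_one √u, (sechMean_pos √u).le, exp_pos (-(u / 2))]

lemma FNL_lt_one {u : ℝ} (hu : 0 ≤ u) : FNL u < 1 := by
  rw [FNL_eq hu]
  linarith [mul_pos (exp_pos (-(u / 2))) (sechMean_pos √u)]

lemma concaveOn_FNL : ConcaveOn ℝ (Ioi 0) FNL := by
  have hderiv : ∀ u ∈ Ioi (0 : ℝ), HasDerivAt FNL (exp (-(u / 2)) * sechCubeMean √u) u :=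
    fun u hu => hasDerivAt_FNL hu
  refine AntitoneOn.concaveOn_of_deriv (convex_Ioi 0)
    (fun u hu => (hderiv u hu).continuousAt.continuousWithinAt)
    (fun u hu => (hderiv u (interior_subset hu)).differentiableAt.differentiableWithinAt) ?_
  rw [interior_Ioi]
  intro a ha b hb hab
  rw [(hderiv a ha).deriv, (hderiv b hb).deriv]
  exact mul_le_mul (exp_le_exp.2 (by linarith)) (sechCubeMean_anti (sqrt_nonneg a)
    (sqrt_le_sqrt hab)) (sechCubeMean_nonneg _) (exp_pos _).le

/-- For every `t, h > 0` the consistency equation `x = F(t x + h)` has a unique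
solution in `(0,1)`. -/
theorem consistency_equation_unique_solution (t h : ℝ) (ht : 0 < t) (hh : 0 < h) :
    ∃! x : ℝ, 0 < x ∧ x < 1 ∧ x = FNL (t * x + h) :=
  concaveOn_FNL.existsUnique_eq_comp_mul_add (fun _ => FNL_pos) (fun _ hu => FNL_lt_one hu.le)
    ht hh
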